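/- arXiv:1203.2288 — 10 statements merged into one kernel-verified Lean document; each statement's English description precedes it below -/
import Mathlib

section
/- The function φ(a,b) = C(a,b) − S(a,b) is convex on (0,∞)², where C is the contra-harmonic mean and S the root-mean-square. -/
noncomputable def meanA (a b : ℝ) : ℝ := (a + b) / 2
noncomputable def meanG (a b : ℝ) : ℝ := Real.sqrt (a * b)
noncomputable def meanH (a b : ℝ) : ℝ := 2 * a * b / (a + b)
noncomputable def meanN (a b : ℝ) : ℝ := (a + Real.sqrt (a * b) + b) / 3
noncomputable def meanC (a b : ℝ) : ℝ := (a ^ 2 + b ^ 2) / (a + b)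
noncomputable def meanS (a b : ℝ) : ℝ := Real.sqrt ((a ^ 2 + b ^ 2) / 2)
noncomputable def meanR (a b : ℝ) : ℝ := 2 * (a ^ 2 + a * b + b ^ 2) / (3 * (a + b))
noncomputable def triDelta (a b : ℝ) : ℝ := (a - b) ^ 2 / (a + b)
noncomputable def hellinger (a b : ℝ) : ℝ := (Real.sqrt a - Real.sqrt b) ^ 2 / 2

/-!
Write `s = a + b` and `u = S(a, b)`. Then `C = 2u²/s`, so `C - S = g(s, u)` with
`g(s, u) = 2u²/s - u`. The function `g` is jointly convex on `s > 0` (`u²/s` is the perspective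
of `u ↦ u²`), and it is nondecreasing in `u` as long as `u ≥ s/4`. Since `s` is linear, `S` is
convex (it is a Euclidean norm up to a factor) and `S ≥ A = s/2`, the usual composition rule
for convex functions applies.
-/

open Set

lemma meanS_eq_inv_sqrt_two_mul_norm (a b : ℝ) :
    meanS a b = (√2)⁻¹ * ‖WithLp.toLp 2 (a, b)‖ := by
  rw [meanS, WithLp.prod_norm_eq_of_L2, Real.sqrt_div' _ zero_le_two]
  simp [div_eq_inv_mul]

lemma convexOn_meanS : ConvexOn ℝ univ (fun p : ℝ × ℝ => meanS p.1 p.2) := by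
  have h := ((convexOn_norm convex_univ).comp_linearMap
    (WithLp.linearEquiv 2 ℝ (ℝ × ℝ)).symm.toLinearMap).smul (c := (√2)⁻¹) (by positivity)
  simpa [meanS_eq_inv_sqrt_two_mul_norm] using h

lemma meanA_le_meanS (a b : ℝ) : meanA a b ≤ meanS a b :=
  Real.le_sqrt_of_sq_le (by rw [meanA]; nlinarith [sq_nonneg (a - b)])

lemma meanC_eq_two_mul_meanS_sq_div (a b : ℝ) : meanC a b = 2 * meanS a b ^ 2 / (a + b) := by
  rw [meanC, meanS, Real.sq_sqrt (by positivity)]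
  ring

lemma convexOn_sq_div : ConvexOn ℝ (Ioi 0 ×ˢ univ) (fun q : ℝ × ℝ => q.2 ^ 2 / q.1) := by
  refine convexOn_iff_forall_pos.2 ⟨(convex_Ioi 0).prod convex_univ, ?_⟩
  rintro ⟨s, u⟩ ⟨hs, -⟩ ⟨t, v⟩ ⟨ht, -⟩ k m hk hm -
  have hks : 0 < k * s := mul_pos hk hs
  have hmt : 0 < m * t := mul_pos hm ht
  calc (k * u + m * v) ^ 2 / (k * s + m * t)
      ≤ (k * u) ^ 2 / (k * s) + (m * v) ^ 2 / (m * t) := by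
        simpa using Finset.sq_sum_div_le_sum_sq_div Finset.univ ![k * u, m * v]
          (g := ![k * s, m * t]) (by simp [Fin.forall_fin_two, hks, hmt])
    _ = k * (u ^ 2 / s) + m * (v ^ 2 / t) := by field_simp

lemma convexOn_two_mul_sq_div_sub :
    ConvexOn ℝ (Ioi 0 ×ˢ univ) (fun q : ℝ × ℝ => 2 * q.2 ^ 2 / q.1 - q.2) := by
  have h := (convexOn_sq_div.smul zero_le_two).sub
    ((LinearMap.snd ℝ ℝ ℝ).concaveOn ((convex_Ioi 0).prod convex_univ))
  exact h.congr fun q _ => by simp [mul_div_assoc]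

lemma monotoneOn_two_mul_sq_div_sub {s : ℝ} (hs : 0 < s) :
    MonotoneOn (fun u => 2 * u ^ 2 / s - u) (Ici (s / 4)) := by
  intro u hu v hv huv
  have hdiff : 2 * v ^ 2 / s - v - (2 * u ^ 2 / s - u) = (v - u) * (2 * (u + v) - s) / s := by
    field_simp
    ring
  have hnonneg : 0 ≤ (v - u) * (2 * (u + v) - s) / s :=
    div_nonneg (mul_nonneg (sub_nonneg.2 huv) (by linarith [mem_Ici.1 hu, mem_Ici.1 hv])) hs.le
  linarith

theorem stmt_4 :
    ConvexOn ℝ (Set.Ioi (0 : ℝ) ×ˢ Set.Ioi (0 : ℝ))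
      (fun p : ℝ × ℝ => meanC p.1 p.2 - meanS p.1 p.2) := by
  refine ⟨(convex_Ioi 0).prod (convex_Ioi 0), ?_⟩
  rintro p ⟨hp₁, hp₂⟩ q ⟨hq₁, hq₂⟩ k m hk hm hkm
  set g : ℝ × ℝ → ℝ := fun x => 2 * x.2 ^ 2 / x.1 - x.2
  have hφ (x : ℝ × ℝ) : meanC x.1 x.2 - meanS x.1 x.2 = g (x.1 + x.2, meanS x.1 x.2) := by
    rw [meanC_eq_two_mul_meanS_sq_div]
  set r := k • p + m • q
  obtain ⟨hr₁, hr₂⟩ : r ∈ Ioi 0 ×ˢ Ioi 0 :=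
    (convex_Ioi 0).prod (convex_Ioi 0) ⟨hp₁, hp₂⟩ ⟨hq₁, hq₂⟩ hk hm hkm
  have hs : 0 < r.1 + r.2 := add_pos hr₁ hr₂
  have hr : (r.1 + r.2) / 4 ≤ meanS r.1 r.2 :=
    le_trans (by rw [meanA]; linarith) (meanA_le_meanS r.1 r.2)
  have hS : meanS r.1 r.2 ≤ k * meanS p.1 p.2 + m * meanS q.1 q.2 :=
    convexOn_meanS.2 trivial trivial hk hm hkm
  simp only [hφ]
  calc g (r.1 + r.2, meanS r.1 r.2)
      ≤ g (r.1 + r.2, k * meanS p.1 p.2 + m * meanS q.1 q.2) :=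
        monotoneOn_two_mul_sq_div_sub hs hr (hr.trans hS) hS
    _ = g (k • (p.1 + p.2, meanS p.1 p.2) + m • (q.1 + q.2, meanS q.1 q.2)) := by
        simp only [r, Prod.fst_add, Prod.snd_add, Prod.smul_fst, Prod.smul_snd, Prod.smul_mk,
          Prod.mk_add_mk, smul_eq_mul]
        ring_nf
    _ ≤ k • g (p.1 + p.2, meanS p.1 p.2) + m • g (q.1 + q.2, meanS q.1 q.2) :=
        convexOn_two_mul_sq_div_sub.2 ⟨mem_Ioi.2 (add_pos hp₁ hp₂), trivial⟩
          ⟨mem_Ioi.2 (add_pos hq₁ hq₂), trivial⟩ hk hm hkm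
end

section
/- For all positive reals a, b: S(a,b) − A(a,b) ≤ (3/4)(S(a,b) − N(a,b)); equivalently, (S(a,b) + 3N(a,b))/4 ≤ A(a,b). -/
theorem stmt_6 (a b : ℝ) (ha : 0 < a) (hb : 0 < b) :
    meanS a b - meanA a b ≤ (3 / 4) * (meanS a b - meanN a b) := by
  unfold meanS meanA meanN
  set g := Real.sqrt (a * b) with hg
  have hg0 : 0 ≤ g := Real.sqrt_nonneg _
  have hg2 : g ^ 2 = a * b := Real.sq_sqrt (by positivity)
  have hgle : g ≤ (a + b) / 2 := by nlinarith [sq_nonneg (g - (a + b) / 2), sq_nonneg (a - b)]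
  have hS : Real.sqrt ((a ^ 2 + b ^ 2) / 2) ≤ a + b - g := by
    rw [show a + b - g = Real.sqrt ((a + b - g) ^ 2) from
      (Real.sqrt_sq (by linarith)).symm]
    apply Real.sqrt_le_sqrt
    nlinarith [sq_nonneg (a + b - 2 * g)]
  linarith
end

section
/- For all positive reals a, b: S(a,b) − A(a,b) ≤ (1/3)(S(a,b) − H(a,b)); equivalently (2S(a,b) + H(a,b))/3 ≤ A(a,b). -/
/-!
Since `H + C = 2A` for the contraharmonic mean `C = (a² + b²) / (a + b)`, the inequality says
`S ≤ (A + C) / 2`. Both sides are nonnegative, and `((A + C) / 2)² - S² = (a - b)⁴ / (16 (a + b)²)`.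
-/

theorem meanH_add_meanC {a b : ℝ} (hab : a + b ≠ 0) :
    meanH a b + meanC a b = 2 * meanA a b := by
  rw [meanH, meanC, meanA]
  field_simp
  ring

theorem sq_meanA_add_meanC_div_two {a b : ℝ} (hab : a + b ≠ 0) :
    ((meanA a b + meanC a b) / 2) ^ 2
      = (a ^ 2 + b ^ 2) / 2 + (a - b) ^ 4 / (16 * (a + b) ^ 2) := by
  rw [meanA, meanC]
  field_simp
  ring

theorem meanS_le_meanA_add_meanC_div_two {a b : ℝ} (hab : 0 < a + b) :
    meanS a b ≤ (meanA a b + meanC a b) / 2 := by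
  rw [meanS, Real.sqrt_le_iff, sq_meanA_add_meanC_div_two hab.ne']
  constructor
  · rw [meanA, meanC]
    positivity
  · have : 0 ≤ (a - b) ^ 4 / (16 * (a + b) ^ 2) := by positivity
    linarith

theorem stmt_7 (a b : ℝ) (ha : 0 < a) (hb : 0 < b) :
    meanS a b - meanA a b ≤ (1 / 3) * (meanS a b - meanH a b) := by
  have hab : 0 < a + b := add_pos ha hb
  linarith [meanS_le_meanA_add_meanC_div_two hab, meanH_add_meanC hab.ne']
end

section
/- For all positive reals a, b: C(a,b) − R(a,b) ≤ (4/7)(C(a,b) − N(a,b)); equivalently (2C(a,b) + 3N(a,b))/7 ≤ R(a,b). -/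
/-! Both gaps are combinations of `triDelta = (a - b)² / (a + b)` and
`hellinger = (√a - √b)² / 2`: `C - R = Δ / 3` and `C - N = Δ / 2 + h / 3`, so the claim
reduces to `Δ ≤ 4 h`, i.e. to `(√a + √b)² ≤ 2 (a + b)`. -/

theorem meanC_sub_meanR (a b : ℝ) : meanC a b - meanR a b = triDelta a b / 3 := by
  unfold meanC meanR triDelta
  rcases eq_or_ne (a + b) 0 with hab | hab
  · simp [hab]
  · field_simp
    ring

theorem meanC_sub_meanA (a b : ℝ) : meanC a b - meanA a b = triDelta a b / 2 := by
  unfold meanC meanA triDelta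
  rcases eq_or_ne (a + b) 0 with hab | hab
  · simp [hab]
  · field_simp
    ring

theorem meanA_sub_meanN {a b : ℝ} (ha : 0 ≤ a) (hb : 0 ≤ b) :
    meanA a b - meanN a b = hellinger a b / 3 := by
  unfold meanA meanN hellinger
  rw [Real.sqrt_mul ha]
  linear_combination (-1 / 6 : ℝ) * (Real.sq_sqrt ha + Real.sq_sqrt hb)

theorem triDelta_le_four_mul_hellinger {a b : ℝ} (ha : 0 ≤ a) (hb : 0 ≤ b) :
    triDelta a b ≤ 4 * hellinger a b := by
  unfold triDelta hellinger
  rcases (add_nonneg ha hb).eq_or_lt with hab | hab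
  · rw [← hab, div_zero]
    positivity
  obtain ⟨x, hx, rfl⟩ : ∃ x, 0 ≤ x ∧ x ^ 2 = a := ⟨√a, Real.sqrt_nonneg a, Real.sq_sqrt ha⟩
  obtain ⟨y, hy, rfl⟩ : ∃ y, 0 ≤ y ∧ y ^ 2 = b := ⟨√b, Real.sqrt_nonneg b, Real.sq_sqrt hb⟩
  rw [Real.sqrt_sq hx, Real.sqrt_sq hy, div_le_iff₀ hab]
  -- `(x² - y²)² = (x - y)² (x + y)²` and `(x + y)² ≤ 2 (x² + y²)`
  nlinarith [mul_nonneg (sq_nonneg (x - y)) (sq_nonneg (x - y))]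

theorem stmt_9 (a b : ℝ) (ha : 0 < a) (hb : 0 < b) :
    meanC a b - meanR a b ≤ (4 / 7) * (meanC a b - meanN a b) := by
  have hCN : meanC a b - meanN a b = triDelta a b / 2 + hellinger a b / 3 := by
    rw [← meanC_sub_meanA, ← meanA_sub_meanN ha.le hb.le]
    ring
  rw [meanC_sub_meanR, hCN]
  linarith [triDelta_le_four_mul_hellinger ha.le hb.le]
end

section
/- For all positive reals a, b: 7 S(a,b) ≤ 4 C(a,b) + 3 N(a,b). -/
/-!
With `t = a + b`, `s = S(a,b)` and `g = √(ab)` one has `t² = 2(s² + g²)`, `C = 2s²/t` and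
`N = (t + g)/3`, so the inequality reads `(7s - g) t ≤ 2(5s² + g²)`. Squaring reduces it to
`2(5s² + g²)² - (7s - g)²(s² + g²) = (s - g)²(s² + 16sg + g²) ≥ 0`.
-/

lemma seven_mul_sub_sq_mul_le {s g : ℝ} (hsg : 0 ≤ s * g) :
    (7 * s - g) ^ 2 * (s ^ 2 + g ^ 2) ≤ 2 * (5 * s ^ 2 + g ^ 2) ^ 2 := by
  have hfactor : 2 * (5 * s ^ 2 + g ^ 2) ^ 2 - (7 * s - g) ^ 2 * (s ^ 2 + g ^ 2) =
      (s - g) ^ 2 * (s ^ 2 + 16 * (s * g) + g ^ 2) := by ring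
  have : 0 ≤ (s - g) ^ 2 * (s ^ 2 + 16 * (s * g) + g ^ 2) := by positivity
  linarith

lemma seven_mul_mul_le_of_sq_eq {s g t : ℝ} (hsg : 0 ≤ s * g)
    (ht : t ^ 2 = 2 * (s ^ 2 + g ^ 2)) :
    7 * s * t ≤ 8 * s ^ 2 + t ^ 2 + g * t := by
  have hsq : ((7 * s - g) * t) ^ 2 ≤ (2 * (5 * s ^ 2 + g ^ 2)) ^ 2 := by
    rw [mul_pow, ht]
    linarith [seven_mul_sub_sq_mul_le hsg]
  have hlin : (7 * s - g) * t ≤ 2 * (5 * s ^ 2 + g ^ 2) := le_of_sq_le_sq hsq (by positivity)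
  rw [ht]
  linarith

theorem stmt_11 (a b : ℝ) (ha : 0 < a) (hb : 0 < b) :
    7 * meanS a b ≤ 4 * meanC a b + 3 * meanN a b := by
  set s := meanS a b
  set g := Real.sqrt (a * b)
  have hs : s ^ 2 = (a ^ 2 + b ^ 2) / 2 := Real.sq_sqrt (by positivity)
  have hg : g ^ 2 = a * b := Real.sq_sqrt (by positivity)
  have hab : 0 < a + b := by positivity
  have key : 7 * s * (a + b) ≤ 8 * s ^ 2 + (a + b) ^ 2 + g * (a + b) :=
    seven_mul_mul_le_of_sq_eq (mul_nonneg (Real.sqrt_nonneg _) (Real.sqrt_nonneg _))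
      (by rw [hs, hg]; ring)
  calc 7 * s = 7 * s * (a + b) / (a + b) := by field_simp
    _ ≤ (8 * s ^ 2 + (a + b) ^ 2 + g * (a + b)) / (a + b) := by gcongr
    _ = 4 * meanC a b + 3 * meanN a b := by
      unfold meanC meanN
      rw [hs]
      field_simp
      ring
end

section
/- For all positive reals a, b: S(a,b) − N(a,b) ≤ (2/3)(S(a,b) − G(a,b)); equivalently (2G(a,b) + S(a,b))/3 ≤ N(a,b). -/
theorem stmt_12 (a b : ℝ) (ha : 0 < a) (hb : 0 < b) :
    meanS a b - meanN a b ≤ (2 / 3) * (meanS a b - meanG a b) := by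
  unfold meanS meanN meanG
  set g := Real.sqrt (a * b) with hg
  set s := Real.sqrt ((a ^ 2 + b ^ 2) / 2) with hs
  have hg2 : g ^ 2 = a * b := Real.sq_sqrt (by positivity)
  have hs2 : s ^ 2 = (a ^ 2 + b ^ 2) / 2 := Real.sq_sqrt (by positivity)
  have hgn : 0 ≤ g := Real.sqrt_nonneg _
  have hsn : 0 ≤ s := Real.sqrt_nonneg _
  nlinarith [sq_nonneg (g - s), sq_nonneg (g + s - a - b)]
end

section
/- For all positive reals a, b: C(a,b) − S(a,b) ≤ 3(A(a,b) − N(a,b)); equivalently 3N(a,b) + C(a,b) ≤ 3A(a,b) + S(a,b). -/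
/-!
With `A, G, S` the arithmetic, geometric and quadratic means, `C = S² / A`, `3(A - N) = A - G`
and `S² + G² = 2A²`. Multiplying by `A`, the inequality `S² / A - S ≤ A - G` becomes
`(S - G)(2A - S - G) ≥ 0`, and both factors are nonnegative: `G ≤ S` by AM-GM, and
`S + G ≤ 2A` because `(S + G)² ≤ 2(S² + G²) = 4A²`.
-/

lemma meanS_sq (a b : ℝ) : meanS a b ^ 2 = (a ^ 2 + b ^ 2) / 2 :=
  Real.sq_sqrt (by positivity)

lemma meanG_sq {a b : ℝ} (hab : 0 ≤ a * b) : meanG a b ^ 2 = a * b :=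
  Real.sq_sqrt hab

lemma meanC_eq_meanS_sq_div_meanA (a b : ℝ) : meanC a b = meanS a b ^ 2 / meanA a b := by
  rw [meanS_sq, meanA, div_div_div_cancel_right₀ two_ne_zero, meanC]

lemma three_mul_meanA_sub_meanN (a b : ℝ) : 3 * (meanA a b - meanN a b) = meanA a b - meanG a b := by
  rw [meanA, meanN, meanG]
  ring

lemma meanS_sq_add_meanG_sq {a b : ℝ} (hab : 0 ≤ a * b) :
    meanS a b ^ 2 + meanG a b ^ 2 = 2 * meanA a b ^ 2 := by
  rw [meanS_sq, meanG_sq hab, meanA]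
  ring

lemma meanG_le_meanS (a b : ℝ) : meanG a b ≤ meanS a b :=
  Real.sqrt_le_sqrt (by nlinarith [sq_nonneg (a - b)])

lemma meanS_add_meanG_le {a b : ℝ} (hab : 0 ≤ a * b) (hsum : 0 ≤ a + b) :
    meanS a b + meanG a b ≤ 2 * meanA a b := by
  have hA : 0 ≤ 2 * meanA a b := by rw [meanA]; linarith
  refine abs_le_of_sq_le_sq' ?_ hA |>.2
  nlinarith [meanS_sq_add_meanG_sq hab, sq_nonneg (meanS a b - meanG a b)]

lemma sq_div_sub_le_sub {A g s : ℝ} (hA : 0 < A) (hgs : g ≤ s) (hsg : s + g ≤ 2 * A)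
    (hpyth : s ^ 2 + g ^ 2 = 2 * A ^ 2) : s ^ 2 / A - s ≤ A - g := by
  rw [div_sub' hA.ne', div_le_iff₀ hA]
  nlinarith [mul_nonneg (sub_nonneg.2 hgs) (sub_nonneg.2 hsg)]

theorem stmt_13 (a b : ℝ) (ha : 0 < a) (hb : 0 < b) :
    meanC a b - meanS a b ≤ 3 * (meanA a b - meanN a b) := by
  have hab : 0 ≤ a * b := by positivity
  have hA : 0 < meanA a b := by rw [meanA]; positivity
  rw [meanC_eq_meanS_sq_div_meanA, three_mul_meanA_sub_meanN]
  exact sq_div_sub_le_sub hA (meanG_le_meanS a b) (meanS_add_meanG_le hab (by positivity))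
    (meanS_sq_add_meanG_sq hab)
end

section
/- For all positive reals a, b: C(a,b) − N(a,b) ≤ (7/9)(C(a,b) − G(a,b)); equivalently (2C(a,b) + 7G(a,b))/9 ≤ N(a,b). -/
/-! With `s = a + b` and `G² = ab` we have `a² + b² = s² - 2G²`, and the defect
`9N - 2C - 7G` collapses to the square `(s - 2G)² / s = (√a - √b)⁴ / (a + b)`. -/

theorem nine_meanN_sub_two_meanC_sub_seven_meanG {a b : ℝ} (hab : 0 ≤ a * b) :
    9 * meanN a b - 2 * meanC a b - 7 * meanG a b = (a + b - 2 * meanG a b) ^ 2 / (a + b) := by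
  unfold meanN meanC meanG
  have hG : Real.sqrt (a * b) ^ 2 = a * b := Real.sq_sqrt hab
  rcases eq_or_ne (a + b) 0 with hs | hs
  · have hb : b = 0 := by nlinarith [sq_nonneg b]
    have ha : a = 0 := by linarith
    simp [ha, hb]
  · field_simp
    linear_combination (-12) * hG

theorem two_meanC_add_seven_meanG_le_nine_meanN {a b : ℝ} (ha : 0 ≤ a) (hb : 0 ≤ b) :
    2 * meanC a b + 7 * meanG a b ≤ 9 * meanN a b := by
  have h := nine_meanN_sub_two_meanC_sub_seven_meanG (mul_nonneg ha hb)
  have : 0 ≤ (a + b - 2 * meanG a b) ^ 2 / (a + b) := by positivity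
  linarith

theorem stmt_14 (a b : ℝ) (ha : 0 < a) (hb : 0 < b) :
    meanC a b - meanN a b ≤ (7 / 9) * (meanC a b - meanG a b) := by
  linarith [two_meanC_add_seven_meanG_le_nine_meanN ha.le hb.le]
end

section
/- For all positive reals a, b: C(a,b) − G(a,b) ≤ (9/5)(R(a,b) − G(a,b)); equivalently (4G(a,b) + 5C(a,b))/9 ≤ R(a,b). -/
theorem stmt_16 (a b : ℝ) (ha : 0 < a) (hb : 0 < b) :
    meanC a b - meanG a b ≤ (9 / 5) * (meanR a b - meanG a b) := by
  unfold meanC meanG meanR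
  set x := Real.sqrt a with hx
  set y := Real.sqrt b with hy
  have hxa : x ^ 2 = a := Real.sq_sqrt ha.le
  have hyb : y ^ 2 = b := Real.sq_sqrt hb.le
  have hxy : Real.sqrt (a * b) = x * y := by rw [Real.sqrt_mul ha.le]
  have hxpos : 0 < x := Real.sqrt_pos.2 ha
  have hypos : 0 < y := Real.sqrt_pos.2 hb
  have hab : 0 < a + b := by linarith
  rw [hxy, ← hxa, ← hyb]
  have key : 0 ≤ (x - y) ^ 4 := by positivity
  have hs : 0 < x ^ 2 + y ^ 2 := by positivity
  have expand : 9 / 5 * (2 * ((x ^ 2) ^ 2 + x ^ 2 * y ^ 2 + (y ^ 2) ^ 2) / (3 * (x ^ 2 + y ^ 2)) - x * y) - ((x ^ 2) ^ 2 + (y ^ 2) ^ 2) / (x ^ 2 + y ^ 2) + x * y = (1 / 5) * (x - y) ^ 4 / (x ^ 2 + y ^ 2) := by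
    field_simp
    ring
  linarith [div_nonneg (mul_nonneg (by norm_num : (0:ℝ) ≤ 1/5) key) hs.le,
    expand]
end

section
/- For all positive reals a, b: R(a,b) − G(a,b) ≤ 5(A(a,b) − N(a,b)); equivalently 5N(a,b) + R(a,b) ≤ 5A(a,b) + G(a,b). -/
theorem stmt_17 (a b : ℝ) (ha : 0 < a) (hb : 0 < b) :
    meanR a b - meanG a b ≤ 5 * (meanA a b - meanN a b) := by
  have hab : 0 < a + b := by linarith
  have hg : Real.sqrt (a*b) ^ 2 = a*b := Real.sq_sqrt (mul_pos ha hb).le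
  unfold meanR meanG meanA meanN
  rw [← sub_nonneg]
  generalize Real.sqrt (a*b) = g at hg ⊢
  have key : 5 * ((a+b)/2 - (a+g+b)/3) - (2*(a^2+a*b+b^2)/(3*(a+b)) - g) = (a+b-2*g)^2/(6*(a+b)) := by
    rw [show (a+b-2*g)^2 = (a+b)^2 - 4*g*(a+b) + 4*(a*b) by rw [← hg]; ring]
    field_simp
    ring
  rw [key]
  positivity
end
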